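/- Let 0 ≤ α < n, let σ and ω be positive locally finite Borel measures on ℝⁿ, and suppose ω is doubling with doubling exponent θ (i.e. |2^{-k}Q|_ω ≥ 2^{-θk}|Q|_ω for all cubes Q and k ∈ ℕ). Let κ ∈ ℕ with κ > θ + α − n. Then there is a constant C, depending only on n, κ, α and the doubling parameters of ω, such that: (i) P_κ^α(I, ω) ≤ C |I|^{α/n − 1} |I|_ω for every cube I ⊆ ℝⁿ; and (ii) for every cube I and every countable family {I_r} of pairwise disjoint subcubes of I, Σ_r P_κ^α(I_r, 1_I ω)² |I_r|_σ ≤ C · A₂^α(σ,ω) · |I|_ω; in particular the dual κ-th order pivotal constant satisfies 𝒱₂^{α,κ,*}(σ,ω)² ≤ C · A₂^α(σ,ω). -/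
import Mathlib


open MeasureTheory Set Function
open scoped ENNReal NNReal

noncomputable section

/-- `ℝⁿ` with the Euclidean metric. -/
abbrev Rn (n : ℕ) : Type := EuclideanSpace ℝ (Fin n)

/-- The closed axes-parallel cube with center `c` and side length `l`. -/
def Cube {n : ℕ} (c : Rn n) (l : ℝ) : Set (Rn n) :=
  {x | ∀ i, |x i - c i| ≤ l / 2}

/-- `μ` is doubling with doubling constant `D`: `|2Q|_μ ≤ D |Q|_μ` for all cubes `Q`. -/
def DoublingWith {n : ℕ} (μ : Measure (Rn n)) (D : ℝ) : Prop :=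
  ∀ (c : Rn n) (l : ℝ), 0 < l → μ (Cube c (2 * l)) ≤ ENNReal.ofReal D * μ (Cube c l)

/-- `μ` has doubling exponent `θ`: `|2^{-k}Q|_μ ≥ 2^{-θ k}|Q|_μ` for all cubes `Q`, `k ∈ ℕ`. -/
def HasDoublingExp {n : ℕ} (μ : Measure (Rn n)) (θ : ℝ) : Prop :=
  ∀ (c : Rn n) (l : ℝ) (k : ℕ), 0 < l →
    ENNReal.ofReal ((2 : ℝ) ^ (-(θ * (k : ℝ)))) * μ (Cube c l) ≤
      μ (Cube c ((2 : ℝ) ^ (-(k : ℝ)) * l))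

/-- Coifman–Fefferman comparability with parameters `ε, η`:
for all cubes `Q` and compact `E ⊆ Q`, `|E|_ω/|Q|_ω < ε` implies `|E|_σ/|Q|_σ < η`. -/
def CFComparable {n : ℕ} (σ ω : Measure (Rn n)) (ε η : ℝ) : Prop :=
  ∀ (c : Rn n) (l : ℝ), 0 < l → ∀ E : Set (Rn n), IsCompact E → E ⊆ Cube c l →
    ω E < ENNReal.ofReal ε * ω (Cube c l) → σ E < ENNReal.ofReal η * σ (Cube c l)

/-- The reproducing Poisson integral `P^α(Q, μ)` of a cube with center `c`, side length `l`. -/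
def Poisson {n : ℕ} (α : ℝ) (c : Rn n) (l : ℝ) (μ : Measure (Rn n)) : ℝ≥0∞ :=
  ∫⁻ x, ENNReal.ofReal ((l / (l + dist x c) ^ 2) ^ ((n : ℝ) - α)) ∂μ

/-- The `m`-th order fractional Poisson integral `P_m^α(Q, μ)`. -/
def PoissonM {n : ℕ} (α m : ℝ) (c : Rn n) (l : ℝ) (μ : Measure (Rn n)) : ℝ≥0∞ :=
  ∫⁻ y, ENNReal.ofReal (l ^ m / (l + dist y c) ^ ((n : ℝ) + m - α)) ∂μ

/-- The one-tailed Muckenhoupt constant `𝒜₂^α(σ, ω)`, recalling `|Q|^{1-α/n} = ℓ(Q)^{n-α}`. -/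
def A2tailed {n : ℕ} (α : ℝ) (σ ω : Measure (Rn n)) : ℝ≥0∞ :=
  ⨆ (c : Rn n) (l : ℝ) (_ : 0 < l),
    Poisson α c l σ * ω (Cube c l) / ENNReal.ofReal (l ^ ((n : ℝ) - α))

/-- The classical fractional Muckenhoupt constant `A₂^α(σ, ω)`. -/
def A2classical {n : ℕ} (α : ℝ) (σ ω : Measure (Rn n)) : ℝ≥0∞ :=
  ⨆ (c : Rn n) (l : ℝ) (_ : 0 < l),
    σ (Cube c l) * ω (Cube c l) / ENNReal.ofReal (l ^ (2 * ((n : ℝ) - α)))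

lemma abs_coord_le_dist {n : ℕ} (x y : Rn n) (i : Fin n) : |x i - y i| ≤ dist x y := by
  rw [EuclideanSpace.dist_eq]
  have h1 : |x i - y i| = Real.sqrt (dist (x i) (y i) ^ 2) := by
    rw [Real.sqrt_sq_eq_abs, Real.dist_eq, abs_abs]
  rw [h1]
  apply Real.sqrt_le_sqrt
  exact Finset.single_le_sum (f := fun j => dist (x j) (y j) ^ 2) (fun j _ => sq_nonneg _) (Finset.mem_univ i)

lemma isClosed_cube {n : ℕ} (c : Rn n) (l : ℝ) : IsClosed (Cube c l) := by
  have : Cube c l = ⋂ i, {x : Rn n | |x i - c i| ≤ l / 2} := by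
    ext x; simp [Cube]
  rw [this]
  refine isClosed_iInter fun i => ?_
  have hc : Continuous fun x : Rn n => |x i - c i| := by
    have : Continuous fun x : Rn n => x i := by
      exact (EuclideanSpace.proj i).continuous
    fun_prop
  exact isClosed_le hc continuous_const

lemma measurableSet_cube {n : ℕ} (c : Rn n) (l : ℝ) : MeasurableSet (Cube c l) :=
  (isClosed_cube c l).measurableSet

lemma cube_mono {n : ℕ} (c : Rn n) {l l' : ℝ} (h : l ≤ l') : Cube c l ⊆ Cube c l' :=
  fun x hx i => (hx i).trans (by linarith)

lemma iUnion_cube_pow {n : ℕ} (c : Rn n) {l : ℝ} (hl : 0 < l) :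
    (⋃ k : ℕ, Cube c ((2:ℝ) ^ k * l)) = univ := by
  ext x
  simp only [mem_iUnion, mem_univ, iff_true]
  obtain ⟨k, hk⟩ := pow_unbounded_of_one_lt (2 * dist x c / l) (one_lt_two (α := ℝ))
  refine ⟨k, fun i => ?_⟩
  have h1 : |x i - c i| ≤ dist x c := abs_coord_le_dist x c i
  have h2 : 2 * dist x c ≤ 2 ^ k * l := by
    rw [div_lt_iff₀ hl] at hk; linarith
  linarith

lemma poisson_bound (n : ℕ) (α : ℝ) (hαn : α < n) (θ : ℝ) (hθ : 0 < θ) (κ : ℕ)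
    (hκ : θ + α - (n : ℝ) < (κ : ℝ)) :
    ∃ C0 : ℝ, 0 < C0 ∧ ∀ ω : Measure (Rn n), HasDoublingExp ω θ →
      ∀ (c : Rn n) (l : ℝ), 0 < l →
        PoissonM α (κ : ℝ) c l ω ≤
          ENNReal.ofReal (C0 * l ^ (α - (n : ℝ))) * ω (Cube c l) := by
  set γ : ℝ := (n : ℝ) + (κ : ℝ) - α with hγdef
  have hγθ : θ < γ := by simp only [hγdef]; linarith
  have hγ0 : 0 < γ := hθ.trans hγθ
  set r : ℝ := (2 : ℝ) ^ (θ - γ) with hrdef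
  have hr0 : 0 < r := Real.rpow_pos_of_pos two_pos _
  have hr1 : r < 1 := Real.rpow_lt_one_of_one_lt_of_neg one_lt_two (by linarith)
  refine ⟨(4 : ℝ) ^ γ * (1 - r)⁻¹, mul_pos (Real.rpow_pos_of_pos four_pos γ)
    (inv_pos.2 (sub_pos.2 hr1)), ?_⟩
  intro ω hdbl c l hl
  set S : ℕ → Set (Rn n) := fun k => Cube c ((2 : ℝ) ^ k * l) with hSdef
  set A : ℕ → Set (Rn n) := fun k => Nat.casesOn k (S 0) (fun j => S (j + 1) \ S j) with hAdef
  have hAmeas : ∀ k, MeasurableSet (A k) := by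
    intro k; cases k with
    | zero => exact measurableSet_cube _ _
    | succ j => exact (measurableSet_cube _ _).diff (measurableSet_cube _ _)
  have hAS : ∀ k, A k ⊆ S k := by
    intro k; cases k with
    | zero => exact Subset.rfl
    | succ j => exact diff_subset
  have hUnion : (⋃ k, A k) = univ := by
    apply Subset.antisymm (subset_univ _)
    rw [← iUnion_cube_pow c hl]
    refine iUnion_subset fun k => ?_
    induction k with
    | zero => exact subset_iUnion A 0
    | succ j ih =>
      intro x hx
      by_cases hx' : x ∈ Cube c ((2 : ℝ) ^ j * l)
      · exact ih hx'
      · exact mem_iUnion.2 ⟨j + 1, ⟨hx, hx'⟩⟩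
  -- pointwise bound on A k
  have hpt : ∀ k : ℕ, ∀ y ∈ A k,
      ENNReal.ofReal (l ^ (κ : ℝ) / (l + dist y c) ^ γ) ≤
        ENNReal.ofReal ((4 : ℝ) ^ γ * (2 : ℝ) ^ (-((k : ℝ) * γ)) * l ^ (α - (n : ℝ))) := by
    intro k y hy
    apply ENNReal.ofReal_le_ofReal
    have hd : 0 ≤ dist y c := dist_nonneg
    have h2k : (0 : ℝ) < 2 ^ k := by positivity
    have key : (2 : ℝ) ^ k * l ≤ 4 * (l + dist y c) := by
      cases k with
      | zero => simp only [pow_zero, one_mul]; linarith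
      | succ j =>
        have hy' : y ∉ S j := hy.2
        simp only [hSdef, Cube, mem_setOf_eq, not_forall] at hy'
        obtain ⟨i, hi⟩ := hy'
        have h1 : |y i - c i| ≤ dist y c := abs_coord_le_dist y c i
        have h2 : (2:ℝ) ^ j * l / 2 < dist y c := lt_of_lt_of_le (not_le.1 hi) h1
        have h3 : (0:ℝ) < 2 ^ j := by positivity
        rw [pow_succ]
        nlinarith
    have hbase : (0 : ℝ) < (2 : ℝ) ^ k * l / 4 := by positivity
    have hle : (2 : ℝ) ^ k * l / 4 ≤ l + dist y c := by linarith
    have hmono : ((2 : ℝ) ^ k * l / 4) ^ γ ≤ (l + dist y c) ^ γ :=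
      Real.rpow_le_rpow hbase.le hle hγ0.le
    have h1 : l ^ (κ : ℝ) / (l + dist y c) ^ γ ≤ l ^ (κ : ℝ) / ((2 : ℝ) ^ k * l / 4) ^ γ := by
      apply div_le_div_of_nonneg_left (Real.rpow_nonneg hl.le _)
        (Real.rpow_pos_of_pos hbase γ) hmono
    refine h1.trans (le_of_eq ?_)
    have hexp : α - (n : ℝ) = (κ : ℝ) - γ := by rw [hγdef]; ring
    rw [hexp, Real.rpow_sub hl, Real.div_rpow (by positivity) (by norm_num),
      Real.mul_rpow (by positivity) hl.le, ← Real.rpow_natCast (2:ℝ) k,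
      ← Real.rpow_mul (by norm_num : (0:ℝ) ≤ 2), Real.rpow_neg (by norm_num : (0:ℝ) ≤ 2)]
    have p1 : (0:ℝ) < (2:ℝ) ^ ((k:ℝ) * γ) := Real.rpow_pos_of_pos two_pos _
    have p2 : (0:ℝ) < l ^ γ := Real.rpow_pos_of_pos hl _
    have p3 : (0:ℝ) < (4:ℝ) ^ γ := Real.rpow_pos_of_pos four_pos _
    field_simp
  -- doubling bound
  have hSk : ∀ k : ℕ, ω (S k) ≤ ENNReal.ofReal ((2 : ℝ) ^ (θ * (k : ℝ))) * ω (Cube c l) := by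
    intro k
    have hd := hdbl c ((2 : ℝ) ^ k * l) k (by positivity)
    have harg : (2 : ℝ) ^ (-(k : ℝ)) * ((2 : ℝ) ^ k * l) = l := by
      rw [← Real.rpow_natCast (2:ℝ) k, ← mul_assoc, ← Real.rpow_add two_pos]
      simp
    rw [harg] at hd
    have hone : ENNReal.ofReal ((2 : ℝ) ^ (θ * (k : ℝ))) *
        ENNReal.ofReal ((2 : ℝ) ^ (-(θ * (k : ℝ)))) = 1 := by
      rw [← ENNReal.ofReal_mul (Real.rpow_nonneg (by norm_num) _), ← Real.rpow_add two_pos]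
      simp
    calc ω (S k) = (ENNReal.ofReal ((2 : ℝ) ^ (θ * (k : ℝ))) *
          ENNReal.ofReal ((2 : ℝ) ^ (-(θ * (k : ℝ))))) * ω (S k) := by rw [hone, one_mul]
      _ = ENNReal.ofReal ((2 : ℝ) ^ (θ * (k : ℝ))) *
          (ENNReal.ofReal ((2 : ℝ) ^ (-(θ * (k : ℝ)))) * ω (S k)) := by rw [mul_assoc]
      _ ≤ ENNReal.ofReal ((2 : ℝ) ^ (θ * (k : ℝ))) * ω (Cube c l) := mul_le_mul_right hd _
  -- main chain
  calc PoissonM α (κ : ℝ) c l ω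
      = ∫⁻ y in ⋃ k, A k, ENNReal.ofReal (l ^ (κ:ℝ) / (l + dist y c) ^ γ) ∂ω := by
        rw [hUnion, Measure.restrict_univ]; rfl
    _ ≤ ∑' k, ∫⁻ y in A k, ENNReal.ofReal (l ^ (κ:ℝ) / (l + dist y c) ^ γ) ∂ω :=
        lintegral_iUnion_le A _
    _ ≤ ∑' k : ℕ, ENNReal.ofReal ((4:ℝ) ^ γ * (2:ℝ) ^ (-((k:ℝ) * γ)) * l ^ (α - (n:ℝ))) *
          (ENNReal.ofReal ((2 : ℝ) ^ (θ * (k : ℝ))) * ω (Cube c l)) := by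
        refine ENNReal.tsum_le_tsum fun k => ?_
        calc ∫⁻ y in A k, ENNReal.ofReal (l ^ (κ:ℝ) / (l + dist y c) ^ γ) ∂ω
            ≤ ∫⁻ _ in A k, ENNReal.ofReal ((4:ℝ) ^ γ * (2:ℝ) ^ (-((k:ℝ) * γ)) *
                l ^ (α - (n:ℝ))) ∂ω := setLIntegral_mono' (hAmeas k) (hpt k)
          _ = ENNReal.ofReal ((4:ℝ) ^ γ * (2:ℝ) ^ (-((k:ℝ) * γ)) * l ^ (α - (n:ℝ))) *
              ω (A k) := setLIntegral_const _ _
          _ ≤ _ := by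
              refine mul_le_mul_right ((measure_mono (hAS k)).trans (hSk k)) _
    _ = (∑' k : ℕ, ENNReal.ofReal ((4:ℝ) ^ γ * l ^ (α - (n:ℝ)) * r ^ k)) * ω (Cube c l) := by
        rw [← ENNReal.tsum_mul_right]
        refine tsum_congr fun k => ?_
        rw [← mul_assoc, ← ENNReal.ofReal_mul (by positivity)]
        congr 2
        have hrk : r ^ k = (2:ℝ) ^ ((θ - γ) * (k:ℝ)) := by
          rw [hrdef, ← Real.rpow_natCast ((2:ℝ) ^ (θ - γ)) k,
            ← Real.rpow_mul (by norm_num : (0:ℝ) ≤ 2)]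
        rw [hrk]
        have : (θ - γ) * (k:ℝ) = -((k:ℝ) * γ) + θ * (k:ℝ) := by ring
        rw [this, Real.rpow_add two_pos]
        ring
    _ = ENNReal.ofReal ((4:ℝ) ^ γ * l ^ (α - (n:ℝ))) * (∑' k : ℕ, ENNReal.ofReal r ^ k) *
          ω (Cube c l) := by
        rw [← ENNReal.tsum_mul_left]
        congr 1
        refine tsum_congr fun k => ?_
        rw [← ENNReal.ofReal_pow hr0.le, ← ENNReal.ofReal_mul (by positivity)]
    _ = ENNReal.ofReal ((4:ℝ) ^ γ * l ^ (α - (n:ℝ))) * ENNReal.ofReal ((1 - r)⁻¹) *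
          ω (Cube c l) := by
        rw [ENNReal.tsum_geometric, ← ENNReal.ofReal_one,
          ← ENNReal.ofReal_sub _ hr0.le, ENNReal.ofReal_inv_of_pos (sub_pos.2 hr1)]
    _ = ENNReal.ofReal ((4:ℝ) ^ γ * (1 - r)⁻¹ * l ^ (α - (n:ℝ))) * ω (Cube c l) := by
        rw [← ENNReal.ofReal_mul (by positivity)]
        congr 2
        ring

/-- If `ω` is doubling with doubling exponent `θ` and `κ > θ + α - n`,
then (i) `P_κ^α(I, ω) ≤ C |I|^{α/n - 1} |I|_ω = C ℓ(I)^{α-n} |I|_ω` for every cube `I`,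
and (ii) for every cube `I` and pairwise disjoint subcubes `{I_r}` of `I`,
`Σ_r P_κ^α(I_r, 1_I ω)² |I_r|_σ ≤ C A₂^α(σ,ω) |I|_ω`; in particular
`𝒱₂^{α,κ,*}(σ,ω)² ≤ C A₂^α(σ,ω)`. -/
theorem statement16
    (n : ℕ) (hn : 0 < n) (α : ℝ) (hα0 : 0 ≤ α) (hαn : α < n)
    (θ : ℝ) (hθ : 0 < θ) (κ : ℕ) (hκ : θ + α - (n : ℝ) < (κ : ℝ)) :
    ∃ C : ℝ, 0 < C ∧
      ∀ ω : Measure (Rn n), IsLocallyFiniteMeasure ω → HasDoublingExp ω θ →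
        -- (i)
        (∀ (c : Rn n) (l : ℝ), 0 < l →
          PoissonM α (κ : ℝ) c l ω ≤
            ENNReal.ofReal (C * l ^ (α - (n : ℝ))) * ω (Cube c l)) ∧
        -- (ii)
        (∀ σ : Measure (Rn n), IsLocallyFiniteMeasure σ →
          ∀ A2 : ℝ, 0 ≤ A2 →
          (∀ (c : Rn n) (l : ℝ), 0 < l →
            σ (Cube c l) * ω (Cube c l) ≤
              ENNReal.ofReal (A2 * l ^ (2 * ((n : ℝ) - α)))) →
          ∀ (c : Rn n) (l : ℝ), 0 < l →
          ∀ (cr : ℕ → Rn n) (lr : ℕ → ℝ),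
            (∀ r, 0 < lr r) → (∀ r, Cube (cr r) (lr r) ⊆ Cube c l) →
            (Pairwise fun r s => Disjoint (Cube (cr r) (lr r)) (Cube (cr s) (lr s))) →
            (∑' r : ℕ, PoissonM α (κ : ℝ) (cr r) (lr r) (ω.restrict (Cube c l)) ^ 2 *
                σ (Cube (cr r) (lr r))) ≤
              ENNReal.ofReal (C * A2) * ω (Cube c l)) := by
  obtain ⟨C0, hC0, hbound⟩ := poisson_bound n α hαn θ hθ κ hκ
  refine ⟨C0 + C0 ^ 2, by positivity, ?_⟩
  intro ω hωlf hωdbl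
  constructor
  · intro c l hl
    refine (hbound ω hωdbl c l hl).trans ?_
    apply mul_le_mul_left
    apply ENNReal.ofReal_le_ofReal
    have h : (0:ℝ) ≤ l ^ (α - (n:ℝ)) := Real.rpow_nonneg hl.le _
    nlinarith [sq_nonneg C0]
  · intro σ hσlf A2 hA2 hA2bound c l hl cr lr hlr hsub hdisj
    have hterm : ∀ r : ℕ,
        PoissonM α (κ:ℝ) (cr r) (lr r) (ω.restrict (Cube c l)) ^ 2 *
            σ (Cube (cr r) (lr r)) ≤
          ENNReal.ofReal (C0 ^ 2 * A2) * ω (Cube (cr r) (lr r)) := by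
      intro r
      set Qr := Cube (cr r) (lr r) with hQr
      have hlr0 := hlr r
      have h1 : PoissonM α (κ:ℝ) (cr r) (lr r) (ω.restrict (Cube c l)) ≤
          PoissonM α (κ:ℝ) (cr r) (lr r) ω :=
        lintegral_mono' Measure.restrict_le_self le_rfl
      have h2 := h1.trans (hbound ω hωdbl (cr r) (lr r) hlr0)
      have hA2r := hA2bound (cr r) (lr r) hlr0
      have key : (lr r ^ (α - (n:ℝ))) ^ 2 * lr r ^ (2 * ((n:ℝ) - α)) = 1 := by
        rw [sq, ← Real.rpow_add hlr0, ← Real.rpow_add hlr0]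
        have : α - (n:ℝ) + (α - (n:ℝ)) + 2 * ((n:ℝ) - α) = 0 := by ring
        rw [this, Real.rpow_zero]
      calc PoissonM α (κ:ℝ) (cr r) (lr r) (ω.restrict (Cube c l)) ^ 2 * σ Qr
          ≤ (ENNReal.ofReal (C0 * lr r ^ (α - (n:ℝ))) * ω Qr) ^ 2 * σ Qr := by
            gcongr
        _ = ENNReal.ofReal ((C0 * lr r ^ (α - (n:ℝ))) ^ 2) * (ω Qr * (σ Qr * ω Qr)) := by
            rw [mul_pow, ← ENNReal.ofReal_pow (by positivity), sq (ω Qr)]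
            ring
        _ ≤ ENNReal.ofReal ((C0 * lr r ^ (α - (n:ℝ))) ^ 2) *
              (ω Qr * ENNReal.ofReal (A2 * lr r ^ (2 * ((n:ℝ) - α)))) := by
            gcongr
        _ = (ENNReal.ofReal ((C0 * lr r ^ (α - (n:ℝ))) ^ 2) *
              ENNReal.ofReal (A2 * lr r ^ (2 * ((n:ℝ) - α)))) * ω Qr := by ring
        _ = ENNReal.ofReal (C0 ^ 2 * A2) * ω Qr := by
            rw [← ENNReal.ofReal_mul (by positivity)]
            congr 1
            have : (C0 * lr r ^ (α - (n:ℝ))) ^ 2 * (A2 * lr r ^ (2 * ((n:ℝ) - α))) =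
                C0 ^ 2 * A2 * ((lr r ^ (α - (n:ℝ))) ^ 2 * lr r ^ (2 * ((n:ℝ) - α))) := by
              ring
            rw [this, key, mul_one]
    calc (∑' r : ℕ, PoissonM α (κ:ℝ) (cr r) (lr r) (ω.restrict (Cube c l)) ^ 2 *
            σ (Cube (cr r) (lr r)))
        ≤ ∑' r : ℕ, ENNReal.ofReal (C0 ^ 2 * A2) * ω (Cube (cr r) (lr r)) :=
          ENNReal.tsum_le_tsum hterm
      _ = ENNReal.ofReal (C0 ^ 2 * A2) * ∑' r : ℕ, ω (Cube (cr r) (lr r)) :=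
          ENNReal.tsum_mul_left
      _ = ENNReal.ofReal (C0 ^ 2 * A2) * ω (⋃ r, Cube (cr r) (lr r)) := by
          rw [measure_iUnion hdisj (fun r => measurableSet_cube _ _)]
      _ ≤ ENNReal.ofReal ((C0 + C0 ^ 2) * A2) * ω (Cube c l) := by
          gcongr
          · nlinarith
          · exact iUnion_subset hsub
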